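/- arXiv:2508.03601 — 8 statements merged into one kernel-verified Lean document; each statement's English description precedes it below -/
import Mathlib

section
/- (Noether's theorem, first order.) Let L : ℝ^m × ℝ^m × ℝ → ℝ be a smooth first-order Lagrangian, and let δq : ℝ^m × ℝ → ℝ^m, δT : ℝ → ℝ, W : ℝ^m × ℝ → ℝ be smooth functions such that for every C² curve q : ℝ → ℝ^m, setting δ̃q(t) := δq(q(t),t) − q̇(t)·δT(t), the Noether identity (∂L/∂x)(q(t),q̇(t),t)·δ̃q(t) + (∂L/∂v)(q(t),q̇(t),t)·(δ̃q)'(t) + d/dt[L(q(t),q̇(t),t)·δT(t) + W(q(t),t)] = 0 holds for all t. Then for every C² solution q of the Euler–Lagrange equation E[q] = 0, the quantity Q(t) := p(t)·δq(q(t),t) − E(t)·δT(t) + W(q(t),t), with p(t) := (∂L/∂v)(q(t),q̇(t),t) and E(t) := p(t)·q̇(t) − L(q(t),q̇(t),t), is constant in t. -/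
/-- Noether's theorem for first-order Lagrangians: if the Noether identity
`∂L/∂x·δ̃q + ∂L/∂v·(δ̃q)' + d/dt[L·δT + W] = 0` (with
`δ̃q(t) = δq(q(t),t) − δT(t)·q̇(t)`) holds along every `C²` curve, then along
every `C²` solution of the Euler–Lagrange equation the charge
`Q(t) = p(t)·δq(q(t),t) − E(t)·δT(t) + W(q(t),t)` is constant. -/
theorem stmt2 (m : ℕ) (L : (Fin m → ℝ) × (Fin m → ℝ) × ℝ → ℝ)
    (hL : ContDiff ℝ (⊤ : ℕ∞) L)
    (δq : (Fin m → ℝ) × ℝ → (Fin m → ℝ)) (δT : ℝ → ℝ) (W : (Fin m → ℝ) × ℝ → ℝ)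
    (hδq : ContDiff ℝ (⊤ : ℕ∞) δq) (hδT : ContDiff ℝ (⊤ : ℕ∞) δT) (hW : ContDiff ℝ (⊤ : ℕ∞) W)
    (hNoether : ∀ q : ℝ → (Fin m → ℝ), ContDiff ℝ 2 q → ∀ t : ℝ,
      fderiv ℝ (fun x => L (x, deriv q t, t)) (q t)
          (δq (q t, t) - δT t • deriv q t)
        + fderiv ℝ (fun v => L (q t, v, t)) (deriv q t)
            (deriv (fun s => δq (q s, s) - δT s • deriv q s) t)
        + deriv (fun s => L (q s, deriv q s, s) * δT s + W (q s, s)) t = 0)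
    (q : ℝ → (Fin m → ℝ)) (hq : ContDiff ℝ 2 q)
    (hEL : ∀ t : ℝ, ∀ u : Fin m → ℝ,
      fderiv ℝ (fun x => L (x, deriv q t, t)) (q t) u
        - deriv (fun s => fderiv ℝ (fun v => L (q s, v, s)) (deriv q s) u) t = 0)
    (Qch : ℝ → ℝ)
    (hQch : ∀ t : ℝ, Qch t =
      fderiv ℝ (fun v => L (q t, v, t)) (deriv q t) (δq (q t, t))
        - (fderiv ℝ (fun v => L (q t, v, t)) (deriv q t) (deriv q t)
            - L (q t, deriv q t, t)) * δT t
        + W (q t, t)) :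
    ∀ t₁ t₂ : ℝ, Qch t₁ = Qch t₂ := by
  classical
  have hLd : Differentiable ℝ L := hL.differentiable (by simp)
  set j₂ : (Fin m → ℝ) →L[ℝ] ((Fin m → ℝ) × (Fin m → ℝ) × ℝ) :=
    (0 : (Fin m → ℝ) →L[ℝ] (Fin m → ℝ)).prod
      ((ContinuousLinearMap.id ℝ (Fin m → ℝ)).prod (0 : (Fin m → ℝ) →L[ℝ] ℝ)) with hj₂
  set j₁ : (Fin m → ℝ) →L[ℝ] ((Fin m → ℝ) × (Fin m → ℝ) × ℝ) :=
    (ContinuousLinearMap.id ℝ (Fin m → ℝ)).prod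
      ((0 : (Fin m → ℝ) →L[ℝ] (Fin m → ℝ)).prod (0 : (Fin m → ℝ) →L[ℝ] ℝ)) with hj₁
  -- partial fderiv in v-slot
  have hPform : ∀ (x v₀ : Fin m → ℝ) (t : ℝ) (u : Fin m → ℝ),
      fderiv ℝ (fun v => L (x, v, t)) v₀ u = fderiv ℝ L (x, v₀, t) (0, u, 0) := by
    intro x v₀ t u
    have h1 : HasFDerivAt (fun v : Fin m → ℝ => (x, v, t)) j₂ v₀ :=
      HasFDerivAt.prodMk (hasFDerivAt_const x v₀) (HasFDerivAt.prodMk (hasFDerivAt_id v₀) (hasFDerivAt_const t v₀))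
    have h2 : HasFDerivAt (fun v : Fin m → ℝ => L (x, v, t))
        ((fderiv ℝ L (x, v₀, t)).comp j₂) v₀ := (hLd (x, v₀, t)).hasFDerivAt.comp v₀ h1
    rw [h2.fderiv]
    simp [hj₂]
  have hXform : ∀ (x₀ v : Fin m → ℝ) (t : ℝ) (u : Fin m → ℝ),
      fderiv ℝ (fun x => L (x, v, t)) x₀ u = fderiv ℝ L (x₀, v, t) (u, 0, 0) := by
    intro x₀ v t u
    have h1 : HasFDerivAt (fun x : Fin m → ℝ => (x, v, t)) j₁ x₀ :=
      HasFDerivAt.prodMk (hasFDerivAt_id x₀) (HasFDerivAt.prodMk (hasFDerivAt_const v x₀) (hasFDerivAt_const t x₀))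
    have h2 : HasFDerivAt (fun x : Fin m → ℝ => L (x, v, t))
        ((fderiv ℝ L (x₀, v, t)).comp j₁) x₀ := (hLd (x₀, v, t)).hasFDerivAt.comp x₀ h1
    rw [h2.fderiv]
    simp [hj₁]
  -- basic regularity
  have hdq : ContDiff ℝ 1 (deriv q) := by
    have h2 : ContDiff ℝ (1 + 1) q := by norm_num; exact hq
    exact (contDiff_succ_iff_deriv.mp h2).2.2
  have hq1 : ContDiff ℝ 1 q := hq.of_le one_le_two
  set F : ℝ → ((Fin m → ℝ) × (Fin m → ℝ) × ℝ) := fun t => (q t, deriv q t, t) with hFdef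
  have hF : ContDiff ℝ 1 F := ContDiff.prodMk hq1 (ContDiff.prodMk hdq contDiff_id)
  set G : ℝ → ((Fin m → ℝ) × (Fin m → ℝ) × ℝ) →L[ℝ] ℝ := fun t => fderiv ℝ L (F t) with hGdef
  have hG : ContDiff ℝ 1 G := (hL.fderiv_right (m := 1) (WithTop.coe_le_coe.mpr (le_top (a := ((1 + 1 : ℕ) : ℕ∞))))).comp hF
  set v : ℝ → (Fin m → ℝ) := fun s => δq (q s, s) - δT s • deriv q s with hvdef
  have hv : ContDiff ℝ 1 v :=
    ((hδq.of_le (by simp)).comp (ContDiff.prodMk hq1 contDiff_id)).sub ((hδT.of_le (by simp)).smul hdq)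
  set h2 : ℝ → ℝ := fun s => L (q s, deriv q s, s) * δT s + W (q s, s) with hh2def
  have hh2 : ContDiff ℝ 1 h2 :=
    (((hL.of_le (by simp)).comp hF).mul (hδT.of_le (by simp))).add
      ((hW.of_le (by simp)).comp (ContDiff.prodMk hq1 contDiff_id))
  set g : ℝ → ℝ := fun t => G t ((0 : Fin m → ℝ), v t, (0 : ℝ)) + h2 t with hgdef
  -- the derivative of g is zero
  have key : ∀ t, HasDerivAt g 0 t := by
    intro t
    have hGt : HasDerivAt G (deriv G t) t := (hG.differentiable one_ne_zero t).hasDerivAt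
    have hGu : ∀ u : Fin m → ℝ,
        deriv (fun s => G s ((0 : Fin m → ℝ), u, (0 : ℝ))) t = deriv G t (0, u, 0) := by
      intro u
      have := (hGt.clm_apply (hasDerivAt_const t (((0 : Fin m → ℝ), u, (0 : ℝ)) :
        (Fin m → ℝ) × (Fin m → ℝ) × ℝ))).deriv
      simpa using this
    -- EL in G-form
    have hEL' : deriv G t (0, v t, 0) = G t (v t, 0, 0) := by
      have h := hEL t (v t)
      rw [sub_eq_zero] at h
      have hfun : (fun s => fderiv ℝ (fun w => L (q s, w, s)) (deriv q s) (v t))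
          = fun s => G s ((0 : Fin m → ℝ), v t, (0 : ℝ)) := by
        funext s
        rw [hPform]
      rw [hfun, hGu] at h
      rw [← h, hXform]
    have hwt : HasDerivAt (fun s => ((((0 : Fin m → ℝ), v s, (0 : ℝ))) :
        (Fin m → ℝ) × (Fin m → ℝ) × ℝ)) ((0 : Fin m → ℝ), deriv v t, (0 : ℝ)) t :=
      HasDerivAt.prodMk (hasDerivAt_const t (0 : Fin m → ℝ))
        (HasDerivAt.prodMk ((hv.differentiable one_ne_zero t).hasDerivAt) (hasDerivAt_const t (0 : ℝ)))
    have hPv : HasDerivAt (fun s => G s ((0 : Fin m → ℝ), v s, (0 : ℝ)))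
        (deriv G t (0, v t, 0) + G t (0, deriv v t, 0)) t := hGt.clm_apply hwt
    have hh2t : HasDerivAt h2 (deriv h2 t) t := (hh2.differentiable one_ne_zero t).hasDerivAt
    have hg' : HasDerivAt g
        (deriv G t (0, v t, 0) + G t (0, deriv v t, 0) + deriv h2 t) t := hPv.add hh2t
    have hN := hNoether q hq t
    have hzero : deriv G t (0, v t, 0) + G t (0, deriv v t, 0) + deriv h2 t = 0 := by
      rw [hEL']
      rw [hXform, hPform] at hN
      exact hN
    rwa [hzero] at hg'
  have hconst : ∀ t₁ t₂, g t₁ = g t₂ := by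
    apply is_const_of_deriv_eq_zero
    · exact fun t => (key t).differentiableAt
    · exact fun t => (key t).deriv
  -- Qch = g
  have hQg : ∀ t, Qch t = g t := by
    intro t
    rw [hQch t, hPform, hPform]
    have hsplit : ((((0 : Fin m → ℝ), v t, (0 : ℝ))) : (Fin m → ℝ) × (Fin m → ℝ) × ℝ)
        = ((((0 : Fin m → ℝ), δq (q t, t), (0 : ℝ))) : (Fin m → ℝ) × (Fin m → ℝ) × ℝ)
          - δT t • ((((0 : Fin m → ℝ), deriv q t, (0 : ℝ))) : (Fin m → ℝ) × (Fin m → ℝ) × ℝ) := by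
      simp [hvdef, Prod.ext_iff]
    show _ = G t ((0 : Fin m → ℝ), v t, (0 : ℝ)) + h2 t
    rw [hsplit, map_sub, map_smul, smul_eq_mul]
    show fderiv ℝ L (q t, deriv q t, t) (0, δq (q t, t), 0)
          - (fderiv ℝ L (q t, deriv q t, t) (0, deriv q t, 0) - L (q t, deriv q t, t)) * δT t
          + W (q t, t)
        = fderiv ℝ L (F t) (0, δq (q t, t), 0) - δT t * fderiv ℝ L (F t) (0, deriv q t, 0)
          + (L (q t, deriv q t, t) * δT t + W (q t, t))
    ring
  intro t₁ t₂
  rw [hQg t₁, hQg t₂, hconst t₁ t₂]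
end

section
/- (Ostrogradski energy identity.) Let n ≥ 1, L : (ℝ^m)^{n+1} × ℝ → ℝ a smooth Lagrangian of order n, and q : ℝ → ℝ^m a C^{2n+1} curve. With the Ostrogradski momenta p_j(t) := Σ_{l=0}^{n−j−1} (−1)^l (d/dt)^l [(∂L/∂x_{j+l+1})(jetₙq(t))], define the Ostrogradski energy E(t) := Σ_{j=0}^{n−1} p_j(t)·q^{(j+1)}(t) − L(jetₙq(t)) and the Euler–Lagrange expression E[q](t) := Σ_{l=0}^{n} (−1)^l (d/dt)^l [(∂L/∂x_l)(jetₙq(t))]. Then E'(t) = −E[q](t)·q'(t) − (∂L/∂t)(jetₙq(t)) for all t; in particular, if L has no explicit t-dependence, E is constant along every solution of the Euler–Lagrange equation. -/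
/-- The `n`-jet of a curve `q` at time `t`: `(q(t), q'(t), …, q^{(n)}(t))`. -/
noncomputable def jetN {m : ℕ} (n : ℕ) (q : ℝ → (Fin m → ℝ)) (t : ℝ) :
    Fin (n + 1) → (Fin m → ℝ) :=
  fun i => iteratedDeriv (i : ℕ) q t

/-- Partial gradient of `L(x₀,…,xₙ,t)` in the argument `x_l`, evaluated in the
direction `u`. -/
noncomputable def pdL {m n : ℕ} (L : (Fin (n + 1) → (Fin m → ℝ)) → ℝ → ℝ)
    (l : Fin (n + 1)) (xs : Fin (n + 1) → (Fin m → ℝ)) (t : ℝ) (u : Fin m → ℝ) : ℝ :=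
  fderiv ℝ (fun y => L (Function.update xs l y) t) (xs l) u

/-- `idxN n k` is the index `k` as an element of `Fin (n+1)` (it equals `k`
whenever `k ≤ n`, which is the case everywhere it is used below). -/
def idxN (n k : ℕ) : Fin (n + 1) :=
  ⟨min k n, Nat.lt_succ_of_le (Nat.min_le_right k n)⟩

/-- Ostrogradski momentum
`p_j(t)(u) = Σ_{l=0}^{n−j−1} (−1)^l (d/dt)^l [(∂L/∂x_{j+l+1})(jetₙq(t))·u]`. -/
noncomputable def ostroMom {m : ℕ} (n : ℕ) (L : (Fin (n + 1) → (Fin m → ℝ)) → ℝ → ℝ)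
    (q : ℝ → (Fin m → ℝ)) (j : ℕ) (t : ℝ) (u : Fin m → ℝ) : ℝ :=
  ∑ l ∈ Finset.range (n - j), (-1 : ℝ) ^ l *
    iteratedDeriv l (fun s => pdL L (idxN n (j + l + 1)) (jetN n q s) s u) t

section Aux

variable {m n : ℕ}

lemma idxN_coe (i : Fin (n + 1)) : idxN n (i : ℕ) = i := by
  apply Fin.ext
  simp [idxN, min_eq_left (Fin.is_le i)]

lemma idxN_coe' (k : ℕ) (hk : k ≤ n) : ((idxN n k : Fin (n + 1)) : ℕ) = k := by
  simp [idxN, min_eq_left hk]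

/-- Injection `u ↦ (Pi.single i u, 0)` as a continuous linear map. -/
noncomputable def auxInj (m n : ℕ) (i : Fin (n + 1)) :
    (Fin m → ℝ) →L[ℝ] ((Fin (n + 1) → (Fin m → ℝ)) × ℝ) :=
  (ContinuousLinearMap.pi (Pi.single i (ContinuousLinearMap.id ℝ (Fin m → ℝ)))).prod 0

/-- The `i`-th partial differential of `L` along the extended jet, as a
continuous linear map. -/
noncomputable def auxB (L : (Fin (n + 1) → (Fin m → ℝ)) → ℝ → ℝ)
    (q : ℝ → (Fin m → ℝ)) (i : Fin (n + 1)) (s : ℝ) : (Fin m → ℝ) →L[ℝ] ℝ :=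
  (fderiv ℝ (fun p : (Fin (n + 1) → (Fin m → ℝ)) × ℝ => L p.1 p.2) (jetN n q s, s)).comp
    (auxInj m n i)

lemma auxInj_apply (i : Fin (n + 1)) (u : Fin m → ℝ) :
    auxInj m n i u = (Pi.single i u, 0) := by
  rw [auxInj, ContinuousLinearMap.prod_apply]
  simp only [ContinuousLinearMap.zero_apply, Prod.mk.injEq]
  refine ⟨?_, trivial⟩
  funext j
  rw [ContinuousLinearMap.pi_apply]
  by_cases h : j = i
  · subst h; simp
  · simp [Pi.single_eq_of_ne h]

lemma auxB_apply (L : (Fin (n + 1) → (Fin m → ℝ)) → ℝ → ℝ)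
    (q : ℝ → (Fin m → ℝ)) (i : Fin (n + 1)) (s : ℝ) (u : Fin m → ℝ) :
    auxB L q i s u
      = fderiv ℝ (fun p : (Fin (n + 1) → (Fin m → ℝ)) × ℝ => L p.1 p.2) (jetN n q s, s)
          (Pi.single i u, 0) := by
  rw [auxB, ContinuousLinearMap.comp_apply, auxInj_apply]

lemma pdL_eq (L : (Fin (n + 1) → (Fin m → ℝ)) → ℝ → ℝ)
    (hL : ContDiff ℝ (⊤ : ℕ∞) (fun p : (Fin (n + 1) → (Fin m → ℝ)) × ℝ => L p.1 p.2))
    (q : ℝ → (Fin m → ℝ)) (i : Fin (n + 1)) (s : ℝ) (u : Fin m → ℝ) :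
    pdL L i (jetN n q s) s u = auxB L q i s u := by
  have h1 : HasFDerivAt (fun y : Fin m → ℝ => ((Function.update (jetN n q s) i y), s))
      (auxInj m n i) (jetN n q s i) := by
    rw [auxInj]
    exact HasFDerivAt.prodMk (hasFDerivAt_update (jetN n q s) (jetN n q s i))
      (hasFDerivAt_const s (jetN n q s i))
  have h2 : HasFDerivAt (fun p : (Fin (n + 1) → (Fin m → ℝ)) × ℝ => L p.1 p.2)
      (fderiv ℝ (fun p : (Fin (n + 1) → (Fin m → ℝ)) × ℝ => L p.1 p.2) (jetN n q s, s))
      (jetN n q s, s) :=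
    (hL.differentiable (by simp) _).hasFDerivAt
  have hx : HasFDerivAt (fun p : (Fin (n + 1) → (Fin m → ℝ)) × ℝ => L p.1 p.2)
      (fderiv ℝ (fun p : (Fin (n + 1) → (Fin m → ℝ)) × ℝ => L p.1 p.2) (jetN n q s, s))
      ((fun y : Fin m → ℝ => ((Function.update (jetN n q s) i y), s)) (jetN n q s i)) := by
    simpa [Function.update_eq_self] using h2
  have h3 := hx.comp (jetN n q s i) h1
  have h4 : HasFDerivAt (fun y : Fin m → ℝ => L (Function.update (jetN n q s) i y) s)
      (auxB L q i s) (jetN n q s i) := h3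
  rw [pdL, h4.fderiv]

lemma contDiff_jet (q : ℝ → (Fin m → ℝ)) (hq : ContDiff ℝ (2 * n + 1 : ℕ) q) :
    ContDiff ℝ (n + 1 : ℕ) (jetN n q) := by
  rw [contDiff_pi]
  intro i
  have h1 : ContDiff ℝ (((n + 1) + (i : ℕ) : ℕ) : WithTop ℕ∞) q := by
    apply hq.of_le
    have h : ((n + 1) + (i : ℕ)) ≤ 2 * n + 1 := by have := i.isLt; omega
    exact_mod_cast h
  have h2 := ContDiff.iterate_deriv' (n + 1) (i : ℕ) h1
  have h3 : (fun t => jetN n q t i) = deriv^[(i : ℕ)] q := by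
    funext t; simp [jetN, iteratedDeriv_eq_iterate]
  rw [h3]; exact h2

lemma contDiff_auxB (L : (Fin (n + 1) → (Fin m → ℝ)) → ℝ → ℝ)
    (hL : ContDiff ℝ (⊤ : ℕ∞) (fun p : (Fin (n + 1) → (Fin m → ℝ)) × ℝ => L p.1 p.2))
    (q : ℝ → (Fin m → ℝ)) (hq : ContDiff ℝ (2 * n + 1 : ℕ) q) (i : Fin (n + 1)) :
    ContDiff ℝ (n + 1 : ℕ) (auxB L q i) := by
  have h1 : ContDiff ℝ ((n + 1 : ℕ) : WithTop ℕ∞) (fun s : ℝ => ((jetN n q s, s) :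
      (Fin (n + 1) → (Fin m → ℝ)) × ℝ)) :=
    ContDiff.prodMk (contDiff_jet q hq) contDiff_id
  have h2 : ContDiff ℝ ((n + 1 : ℕ) : WithTop ℕ∞)
      (fderiv ℝ (fun p : (Fin (n + 1) → (Fin m → ℝ)) × ℝ => L p.1 p.2)) :=
    hL.fderiv_right (by exact_mod_cast le_top)
  exact (h2.comp h1).clm_comp contDiff_const

lemma diff_iter_auxB (L : (Fin (n + 1) → (Fin m → ℝ)) → ℝ → ℝ)
    (hL : ContDiff ℝ (⊤ : ℕ∞) (fun p : (Fin (n + 1) → (Fin m → ℝ)) × ℝ => L p.1 p.2))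
    (q : ℝ → (Fin m → ℝ)) (hq : ContDiff ℝ (2 * n + 1 : ℕ) q) (i : Fin (n + 1))
    (k : ℕ) (hk : k ≤ n) : Differentiable ℝ (iteratedDeriv k (auxB L q i)) := by
  apply (contDiff_auxB L hL q hq i).differentiable_iteratedDeriv k
  exact_mod_cast Nat.lt_succ_of_le hk

lemma iteratedDeriv_clm_apply_const {F : Type*} [NormedAddCommGroup F] [NormedSpace ℝ F]
    (l : ℕ) (f : ℝ → F →L[ℝ] ℝ) (hf : ∀ k, k < l → Differentiable ℝ (iteratedDeriv k f))
    (u : F) : iteratedDeriv l (fun s => f s u) = fun t => iteratedDeriv l f t u := by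
  induction l with
  | zero => simp
  | succ l ih =>
    rw [iteratedDeriv_succ, ih (fun k hk => hf k (by omega)), iteratedDeriv_succ]
    funext t
    have hd : HasDerivAt (iteratedDeriv l f) (deriv (iteratedDeriv l f) t) t :=
      ((hf l (Nat.lt_succ_self l)) t).hasDerivAt
    have h2 := hd.clm_apply (hasDerivAt_const t u)
    simpa using h2.deriv

/-- The Ostrogradski momentum as a continuous linear map. -/
noncomputable def auxP (L : (Fin (n + 1) → (Fin m → ℝ)) → ℝ → ℝ)
    (q : ℝ → (Fin m → ℝ)) (j : ℕ) (t : ℝ) : (Fin m → ℝ) →L[ℝ] ℝ :=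
  ∑ l ∈ Finset.range (n - j), (-1 : ℝ) ^ l • iteratedDeriv l (auxB L q (idxN n (j + l + 1))) t

/-- The Euler–Lagrange expression as a continuous linear map. -/
noncomputable def auxELc (L : (Fin (n + 1) → (Fin m → ℝ)) → ℝ → ℝ)
    (q : ℝ → (Fin m → ℝ)) (t : ℝ) : (Fin m → ℝ) →L[ℝ] ℝ :=
  ∑ l ∈ Finset.range (n + 1), (-1 : ℝ) ^ l • iteratedDeriv l (auxB L q (idxN n l)) t

lemma ostroMom_eq (L : (Fin (n + 1) → (Fin m → ℝ)) → ℝ → ℝ)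
    (hL : ContDiff ℝ (⊤ : ℕ∞) (fun p : (Fin (n + 1) → (Fin m → ℝ)) × ℝ => L p.1 p.2))
    (q : ℝ → (Fin m → ℝ)) (hq : ContDiff ℝ (2 * n + 1 : ℕ) q)
    (j : ℕ) (t : ℝ) (u : Fin m → ℝ) :
    ostroMom n L q j t u = auxP L q j t u := by
  rw [ostroMom, auxP, ContinuousLinearMap.sum_apply]
  apply Finset.sum_congr rfl
  intro l hl
  rw [Finset.mem_range] at hl
  rw [ContinuousLinearMap.smul_apply, smul_eq_mul]
  congr 1
  have hfe : (fun s => pdL L (idxN n (j + l + 1)) (jetN n q s) s u)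
      = fun s => auxB L q (idxN n (j + l + 1)) s u :=
    funext fun s => pdL_eq L hL q _ s u
  rw [hfe, iteratedDeriv_clm_apply_const l _
    (fun k hk => diff_iter_auxB L hL q hq _ k (by omega)) u]

lemma ELsum_eq (L : (Fin (n + 1) → (Fin m → ℝ)) → ℝ → ℝ)
    (hL : ContDiff ℝ (⊤ : ℕ∞) (fun p : (Fin (n + 1) → (Fin m → ℝ)) × ℝ => L p.1 p.2))
    (q : ℝ → (Fin m → ℝ)) (hq : ContDiff ℝ (2 * n + 1 : ℕ) q)
    (t : ℝ) (u : Fin m → ℝ) :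
    ∑ l ∈ Finset.range (n + 1), (-1 : ℝ) ^ l *
        iteratedDeriv l (fun s => pdL L (idxN n l) (jetN n q s) s u) t
      = auxELc L q t u := by
  rw [auxELc, ContinuousLinearMap.sum_apply]
  apply Finset.sum_congr rfl
  intro l hl
  rw [Finset.mem_range] at hl
  rw [ContinuousLinearMap.smul_apply, smul_eq_mul]
  congr 1
  have hfe : (fun s => pdL L (idxN n l) (jetN n q s) s u)
      = fun s => auxB L q (idxN n l) s u :=
    funext fun s => pdL_eq L hL q _ s u
  rw [hfe, iteratedDeriv_clm_apply_const l _
    (fun k hk => diff_iter_auxB L hL q hq _ k (by omega)) u]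

lemma hasDerivAt_auxP (L : (Fin (n + 1) → (Fin m → ℝ)) → ℝ → ℝ)
    (hL : ContDiff ℝ (⊤ : ℕ∞) (fun p : (Fin (n + 1) → (Fin m → ℝ)) × ℝ => L p.1 p.2))
    (q : ℝ → (Fin m → ℝ)) (hq : ContDiff ℝ (2 * n + 1 : ℕ) q) (j : ℕ) (t : ℝ) :
    HasDerivAt (auxP L q j)
      (∑ l ∈ Finset.range (n - j),
        (-1 : ℝ) ^ l • iteratedDeriv (l + 1) (auxB L q (idxN n (j + l + 1))) t) t := by
  apply HasDerivAt.fun_sum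
  intro l hl
  rw [Finset.mem_range] at hl
  exact HasDerivAt.const_smul (f := iteratedDeriv l (auxB L q (idxN n (j + l + 1))))
    (f' := iteratedDeriv (l + 1) (auxB L q (idxN n (j + l + 1))) t) ((-1 : ℝ) ^ l) (by
    rw [iteratedDeriv_succ]
    exact ((diff_iter_auxB L hL q hq _ l (by omega)) t).hasDerivAt)

lemma tele (g : ℕ → ℕ → ℝ) (N : ℕ) :
    ∑ j ∈ Finset.range N, ∑ l ∈ Finset.range (N - j), (g (j + 1) l - g j (l + 1))
      = ∑ j ∈ Finset.range N, g (j + 1) 0 - ∑ l ∈ Finset.range N, g 0 (l + 1) := by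
  induction N with
  | zero => simp
  | succ N ih =>
    have h1 : ∀ j ∈ Finset.range (N + 1),
        ∑ l ∈ Finset.range (N + 1 - j), (g (j + 1) l - g j (l + 1))
          = ∑ l ∈ Finset.range (N - j), (g (j + 1) l - g j (l + 1))
            + (g (j + 1) (N - j) - g j (N - j + 1)) := by
      intro j hj
      rw [Finset.mem_range] at hj
      rw [show N + 1 - j = (N - j) + 1 by omega, Finset.sum_range_succ]
    rw [Finset.sum_congr rfl h1, Finset.sum_add_distrib]
    rw [Finset.sum_range_succ
      (fun j => ∑ l ∈ Finset.range (N - j), (g (j + 1) l - g j (l + 1))) N]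
    simp only [Nat.sub_self, Finset.range_zero, Finset.sum_empty, add_zero]
    rw [ih]
    have h2 : ∑ j ∈ Finset.range (N + 1), (g (j + 1) (N - j) - g j (N - j + 1))
        = g (N + 1) 0 - g 0 (N + 1) := by
      have h3 : ∀ j ∈ Finset.range (N + 1), (g (j + 1) (N - j) - g j (N - j + 1))
          = ((fun i => g i (N + 1 - i)) (j + 1) - (fun i => g i (N + 1 - i)) j) := by
        intro j hj
        rw [Finset.mem_range] at hj
        simp only
        rw [show N + 1 - (j + 1) = N - j by omega, show N + 1 - j = N - j + 1 by omega]
      rw [Finset.sum_congr rfl h3, Finset.sum_range_sub (fun i => g i (N + 1 - i))]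
      simp
    rw [h2, Finset.sum_range_succ (fun j => g (j + 1) 0) N,
      Finset.sum_range_succ (fun l => g 0 (l + 1)) N]
    ring

end Aux

/-- Ostrogradski energy identity: with energy
`E(t) = Σ_{j<n} p_j(t)·q^{(j+1)}(t) − L(jetₙq(t))` and Euler–Lagrange
expression `E[q](t)(u) = Σ_{l≤n} (−1)^l (d/dt)^l [∂L/∂x_l(jetₙq(t))·u]`, one
has `E'(t) = −E[q](t)·q'(t) − ∂L/∂t(jetₙq(t))`; in particular if `L` has no
explicit time dependence, `E` is constant along Euler–Lagrange solutions. -/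
theorem stmt6 (m n : ℕ) (hn : 1 ≤ n)
    (L : (Fin (n + 1) → (Fin m → ℝ)) → ℝ → ℝ)
    (hL : ContDiff ℝ (⊤ : ℕ∞) (fun p : (Fin (n + 1) → (Fin m → ℝ)) × ℝ => L p.1 p.2))
    (q : ℝ → (Fin m → ℝ)) (hq : ContDiff ℝ (2 * n + 1 : ℕ) q)
    (En : ℝ → ℝ)
    (hEn : ∀ t : ℝ, En t =
      (∑ j ∈ Finset.range n, ostroMom n L q j t (iteratedDeriv (j + 1) q t))
        - L (jetN n q t) t)
    (EL : ℝ → (Fin m → ℝ) → ℝ)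
    (hEL : ∀ (t : ℝ) (u : Fin m → ℝ), EL t u =
      ∑ l ∈ Finset.range (n + 1), (-1 : ℝ) ^ l *
        iteratedDeriv l (fun s => pdL L (idxN n l) (jetN n q s) s u) t) :
    (∀ t : ℝ, deriv En t
        = -(EL t (deriv q t)) - deriv (fun s => L (jetN n q t) s) t) ∧
    ((∀ (xs : Fin (n + 1) → (Fin m → ℝ)) (t s : ℝ), L xs t = L xs s) →
      (∀ (t : ℝ) (u : Fin m → ℝ), EL t u = 0) →
      ∀ t₁ t₂ : ℝ, En t₁ = En t₂) := by
  classical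
  have hFd : ∀ x : (Fin (n + 1) → (Fin m → ℝ)) × ℝ,
      HasFDerivAt (fun p : (Fin (n + 1) → (Fin m → ℝ)) × ℝ => L p.1 p.2)
        (fderiv ℝ (fun p : (Fin (n + 1) → (Fin m → ℝ)) × ℝ => L p.1 p.2) x) x :=
    fun x => (hL.differentiable (by simp) x).hasFDerivAt
  have hv : ∀ k : ℕ, k < 2 * n + 1 → ∀ t : ℝ,
      HasDerivAt (iteratedDeriv k q) (iteratedDeriv (k + 1) q t) t := by
    intro k hk t
    rw [iteratedDeriv_succ]
    exact ((hq.differentiable_iteratedDeriv k (by exact_mod_cast hk)) t).hasDerivAt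
  have hjd : ∀ t : ℝ, HasDerivAt (jetN n q)
      (fun i : Fin (n + 1) => iteratedDeriv ((i : ℕ) + 1) q t) t := by
    intro t
    apply hasDerivAt_pi.2
    intro i
    exact hv i (by have := i.isLt; omega) t
  have hLt : ∀ t : ℝ, HasDerivAt (fun s => L (jetN n q s) s)
      (fderiv ℝ (fun p : (Fin (n + 1) → (Fin m → ℝ)) × ℝ => L p.1 p.2) (jetN n q t, t)
        ((fun i : Fin (n + 1) => iteratedDeriv ((i : ℕ) + 1) q t), 1)) t := by
    intro t
    exact HasFDerivAt.comp_hasDerivAt (f := fun s : ℝ => (jetN n q s, s)) t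
      (hFd (jetN n q t, t)) ((hjd t).prodMk (hasDerivAt_id t))
  have hLpart : ∀ t : ℝ, HasDerivAt (fun s => L (jetN n q t) s)
      (fderiv ℝ (fun p : (Fin (n + 1) → (Fin m → ℝ)) × ℝ => L p.1 p.2) (jetN n q t, t)
        (0, 1)) t := by
    intro t
    exact HasFDerivAt.comp_hasDerivAt (f := fun s : ℝ => ((jetN n q t, s) :
        (Fin (n + 1) → (Fin m → ℝ)) × ℝ)) t
      (hFd (jetN n q t, t)) ((hasDerivAt_const t (jetN n q t)).prodMk (hasDerivAt_id t))
  have hEn' : En = fun t => (∑ j ∈ Finset.range n, auxP L q j t (iteratedDeriv (j + 1) q t))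
      - L (jetN n q t) t := by
    funext t
    rw [hEn t]
    congr 1
    exact Finset.sum_congr rfl fun j _ => ostroMom_eq L hL q hq j t _
  have hEnHas : ∀ t : ℝ, HasDerivAt En
      ((∑ j ∈ Finset.range n,
        ((∑ l ∈ Finset.range (n - j),
            (-1 : ℝ) ^ l • iteratedDeriv (l + 1) (auxB L q (idxN n (j + l + 1))) t)
              (iteratedDeriv (j + 1) q t)
          + auxP L q j t (iteratedDeriv (j + 1 + 1) q t)))
        - fderiv ℝ (fun p : (Fin (n + 1) → (Fin m → ℝ)) × ℝ => L p.1 p.2) (jetN n q t, t)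
            ((fun i : Fin (n + 1) => iteratedDeriv ((i : ℕ) + 1) q t), 1)) t := by
    intro t
    rw [hEn']
    apply HasDerivAt.sub _ (hLt t)
    apply HasDerivAt.fun_sum
    intro j hj
    rw [Finset.mem_range] at hj
    exact (hasDerivAt_auxP L hL q hq j t).clm_apply (hv (j + 1) (by omega) t)
  have key : ∀ t : ℝ,
      (∑ j ∈ Finset.range n,
        ((∑ l ∈ Finset.range (n - j),
            (-1 : ℝ) ^ l • iteratedDeriv (l + 1) (auxB L q (idxN n (j + l + 1))) t)
              (iteratedDeriv (j + 1) q t)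
          + auxP L q j t (iteratedDeriv (j + 1 + 1) q t)))
        - fderiv ℝ (fun p : (Fin (n + 1) → (Fin m → ℝ)) × ℝ => L p.1 p.2) (jetN n q t, t)
            ((fun i : Fin (n + 1) => iteratedDeriv ((i : ℕ) + 1) q t), 1)
      = -(auxELc L q t (iteratedDeriv 1 q t))
        - fderiv ℝ (fun p : (Fin (n + 1) → (Fin m → ℝ)) × ℝ => L p.1 p.2) (jetN n q t, t)
            (0, 1) := by
    intro t
    set g : ℕ → ℕ → ℝ := fun j l => (-1 : ℝ) ^ l *
      (iteratedDeriv l (auxB L q (idxN n (j + l))) t (iteratedDeriv (j + 1) q t)) with hg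
    have hsplit : fderiv ℝ (fun p : (Fin (n + 1) → (Fin m → ℝ)) × ℝ => L p.1 p.2)
        (jetN n q t, t) ((fun i : Fin (n + 1) => iteratedDeriv ((i : ℕ) + 1) q t), 1)
        = (∑ l ∈ Finset.range (n + 1), auxB L q (idxN n l) t (iteratedDeriv (l + 1) q t))
          + fderiv ℝ (fun p : (Fin (n + 1) → (Fin m → ℝ)) × ℝ => L p.1 p.2)
              (jetN n q t, t) (0, 1) := by
      have e1 : ((fun i : Fin (n + 1) => iteratedDeriv ((i : ℕ) + 1) q t), (1 : ℝ))
          = (∑ i : Fin (n + 1),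
              ((Pi.single i (iteratedDeriv ((i : ℕ) + 1) q t), 0) :
                (Fin (n + 1) → (Fin m → ℝ)) × ℝ)) + ((0 : Fin (n + 1) → (Fin m → ℝ)), 1) := by
        refine Prod.ext ?_ ?_
        · rw [Prod.fst_add, Prod.fst_sum]
          simp only
          rw [Finset.univ_sum_single (fun i : Fin (n + 1) => iteratedDeriv ((i : ℕ) + 1) q t)]
          simp
        · rw [Prod.snd_add, Prod.snd_sum]
          simp
      rw [e1, map_add, map_sum]
      congr 1
      rw [← Fin.sum_univ_eq_sum_range
        (fun k => auxB L q (idxN n k) t (iteratedDeriv (k + 1) q t)) (n + 1)]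
      apply Finset.sum_congr rfl
      intro i _
      rw [idxN_coe i, auxB_apply]
    rw [hsplit]
    have hA : ∀ j ∈ Finset.range n,
        ((∑ l ∈ Finset.range (n - j),
            (-1 : ℝ) ^ l • iteratedDeriv (l + 1) (auxB L q (idxN n (j + l + 1))) t)
              (iteratedDeriv (j + 1) q t)
          + auxP L q j t (iteratedDeriv (j + 1 + 1) q t))
        = ∑ l ∈ Finset.range (n - j), (g (j + 1) l - g j (l + 1)) := by
      intro j hj
      rw [auxP, ContinuousLinearMap.sum_apply, ContinuousLinearMap.sum_apply,
        ← Finset.sum_add_distrib]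
      apply Finset.sum_congr rfl
      intro l hl
      rw [ContinuousLinearMap.smul_apply, ContinuousLinearMap.smul_apply,
        smul_eq_mul, smul_eq_mul]
      simp only [hg]
      rw [show j + 1 + l = j + l + 1 by omega, show j + (l + 1) = j + l + 1 by omega]
      ring
    rw [Finset.sum_congr rfl hA, tele g n]
    have hB0 : ∑ l ∈ Finset.range (n + 1), auxB L q (idxN n l) t (iteratedDeriv (l + 1) q t)
        = ∑ l ∈ Finset.range (n + 1), g l 0 := by
      apply Finset.sum_congr rfl
      intro l _
      simp [hg, iteratedDeriv_zero]
    have hELs : auxELc L q t (iteratedDeriv 1 q t) = ∑ l ∈ Finset.range (n + 1), g 0 l := by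
      rw [auxELc, ContinuousLinearMap.sum_apply]
      apply Finset.sum_congr rfl
      intro l _
      rw [ContinuousLinearMap.smul_apply, smul_eq_mul]
      simp only [hg]
      rw [show (0 : ℕ) + l = l by omega]
    rw [hB0, hELs]
    simp only [Finset.sum_range_succ' (fun l => g l 0) n,
      Finset.sum_range_succ' (fun l => g 0 l) n]
    ring
  constructor
  · intro t
    have h1 : EL t (deriv q t) = auxELc L q t (iteratedDeriv 1 q t) := by
      rw [hEL t (deriv q t),
        show deriv q t = iteratedDeriv 1 q t from by rw [iteratedDeriv_one]]
      exact ELsum_eq L hL q hq t _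
    rw [(hEnHas t).deriv, key t, h1, (hLpart t).deriv]
  · intro hti hELz t₁ t₂
    have hdiff : Differentiable ℝ En := fun t => (hEnHas t).differentiableAt
    apply is_const_of_deriv_eq_zero hdiff
    intro t
    rw [(hEnHas t).deriv, key t]
    have hz1 : auxELc L q t (iteratedDeriv 1 q t) = 0 := by
      rw [← ELsum_eq L hL q hq t (iteratedDeriv 1 q t), ← hEL t (iteratedDeriv 1 q t)]
      exact hELz t _
    have hz2 : fderiv ℝ (fun p : (Fin (n + 1) → (Fin m → ℝ)) × ℝ => L p.1 p.2)
        (jetN n q t, t) (0, 1) = 0 := by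
      rw [← (hLpart t).deriv]
      have hc : (fun s => L (jetN n q t) s) = fun _ => L (jetN n q t) t :=
        funext fun s => hti (jetN n q t) s t
      rw [hc, deriv_const]
    rw [hz1, hz2]
    ring
end

section
/- Let q : ℝ → ℝ be the restriction to ℝ of an entire function (i.e. there exists F : ℂ → ℂ differentiable on all of ℂ with F(x) = q(x) for all real x). Then for every t ∈ ℝ the series Σ_{n=0}^{∞} q^{(2n)}(t)/(2n+1)! converges absolutely and Σ_{n=0}^{∞} q^{(2n)}(t)/(2n+1)! = (1/2)·∫_{t−1}^{t+1} q(τ) dτ. -/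
/-!
The Taylor series of the entire extension at `t` has the real coefficients `q⁽ⁿ⁾(t) / n!` and
converges everywhere. Its convergence at `t + 2` dominates it on `[t - 1, t + 1]` by a geometric
series, so it can be integrated term by term. The odd moments `∫_{-1}^{1} x^(2m+1)` vanish and the
even ones equal `2 / (2m + 1)`, which turns `q⁽²ᵐ⁾(t) / (2m)!` into `2 q⁽²ᵐ⁾(t) / (2m + 1)!`.
-/

open MeasureTheory Nat

theorem HasDerivAt.of_ofReal_comp {g : ℝ → ℝ} {w : ℂ} {x : ℝ}
    (h : HasDerivAt (fun y : ℝ => (g y : ℂ)) w x) : HasDerivAt g w.re x ∧ (w.re : ℂ) = w := by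
  have hre := Complex.reCLM.hasFDerivAt.comp_hasDerivAt x h
  simp only [Function.comp_def, Complex.reCLM_apply, Complex.ofReal_re] at hre
  exact ⟨hre, hre.ofReal_comp.unique h⟩

theorem deriv_eq_ofReal_deriv {F : ℂ → ℂ} {q : ℝ → ℝ} (hFq : ∀ y : ℝ, F y = q y) {x : ℝ}
    (hF : DifferentiableAt ℂ F x) : deriv F x = deriv q x := by
  have h : HasDerivAt (fun y : ℝ => (q y : ℂ)) (deriv F x) x := by
    simpa only [hFq] using hF.hasDerivAt.comp_ofReal
  obtain ⟨hq, hre⟩ := h.of_ofReal_comp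
  rw [hq.deriv, hre]

theorem iteratedDeriv_eq_ofReal_iteratedDeriv {F : ℂ → ℂ} {q : ℝ → ℝ} (hF : Differentiable ℂ F)
    (hFq : ∀ y : ℝ, F y = q y) (n : ℕ) (x : ℝ) : iteratedDeriv n F x = iteratedDeriv n q x := by
  induction n generalizing x with
  | zero => simpa using hFq x
  | succ n ih =>
    rw [iteratedDeriv_succ, iteratedDeriv_succ]
    exact deriv_eq_ofReal_deriv ih ((hF.contDiff (n := ⊤)).differentiable_iteratedDeriv n
      (WithTop.coe_lt_top _) x)

theorem hasSum_taylorSeries_of_ofReal_entire {F : ℂ → ℂ} {q : ℝ → ℝ} (hF : Differentiable ℂ F)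
    (hFq : ∀ y : ℝ, F y = q y) (t τ : ℝ) :
    HasSum (fun n => iteratedDeriv n q t / n ! * (τ - t) ^ n) (q τ) := by
  rw [← Complex.hasSum_ofReal, ← hFq]
  refine (Complex.hasSum_taylorSeries_of_entire hF t τ).congr_fun fun n => ?_
  rw [iteratedDeriv_eq_ofReal_iteratedDeriv hF hFq]
  push_cast
  simp only [smul_eq_mul]
  ring

theorem summable_abs_mul_pow_of_summable_mul_pow {a : ℕ → ℝ} {r R : ℝ}
    (h : Summable fun n => a n * R ^ n) (hr : |r| < |R|) :
    Summable fun n => |a n| * |r| ^ n := by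
  obtain ⟨C, hC⟩ := h.tendsto_atTop_zero.abs.bddAbove_range
  have hR : 0 < |R| := (abs_nonneg r).trans_lt hr
  refine .of_nonneg_of_le (fun n => by positivity) (fun n => ?_)
    ((summable_geometric_of_lt_one (by positivity) ((div_lt_one hR).2 hr)).mul_left C)
  calc |a n| * |r| ^ n = |a n * R ^ n| * (|r| / |R|) ^ n := by
        rw [abs_mul, abs_pow, div_pow]; field_simp
    _ ≤ C * (|r| / |R|) ^ n := by
        gcongr
        exact hC ⟨n, rfl⟩

theorem hasSum_intervalIntegral_of_hasSum_mul_pow {a : ℕ → ℝ} {f : ℝ → ℝ} {t r R : ℝ}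
    (hR : Summable fun n => a n * R ^ n) (hr : |r| < |R|)
    (hf : ∀ τ, |τ - t| ≤ |r| → HasSum (fun n => a n * (τ - t) ^ n) (f τ)) :
    HasSum (fun n => ∫ τ in (t - r)..(t + r), a n * (τ - t) ^ n)
      (∫ τ in (t - r)..(t + r), f τ) := by
  have hball : ∀ τ ∈ Set.uIoc (t - r) (t + r), |τ - t| ≤ |r| := by
    intro τ hτ
    have := Set.uIoc_subset_uIcc hτ
    rw [Set.mem_uIcc] at this
    rw [abs_le]
    rcases this with h | h <;> constructor <;> cases abs_cases r <;> linarith [h.1, h.2]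
  refine intervalIntegral.hasSum_integral_of_dominated_convergence (fun n _ => |a n| * |r| ^ n)
    (fun n => by fun_prop) (fun n => .of_forall fun τ hτ => ?_)
    (.of_forall fun _ _ => summable_abs_mul_pow_of_summable_mul_pow hR hr)
    intervalIntegrable_const (.of_forall fun τ hτ => hf τ (hball τ hτ))
  rw [norm_mul, norm_pow, Real.norm_eq_abs, Real.norm_eq_abs]
  exact mul_le_mul_of_nonneg_left (pow_le_pow_left₀ (abs_nonneg _) (hball τ hτ) n) (abs_nonneg _)

theorem integral_neg_one_one_pow_two_mul (m : ℕ) :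
    ∫ x in (-1 : ℝ)..1, x ^ (2 * m) = 2 / (2 * m + 1) := by
  rw [integral_pow, (even_two_mul m).add_one.neg_one_pow]
  push_cast
  ring

theorem integral_neg_one_one_pow_two_mul_add_one (m : ℕ) :
    ∫ x in (-1 : ℝ)..1, x ^ (2 * m + 1) = 0 := by
  rw [integral_pow, show 2 * m + 1 + 1 = 2 * (m + 1) by ring, (even_two_mul _).neg_one_pow]
  simp

theorem hasSum_two_mul_div_factorial_succ_of_hasSum_moments {d : ℕ → ℝ} {s : ℝ}
    (h : HasSum (fun n => d n / n ! * ∫ x in (-1 : ℝ)..1, x ^ n) s) :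
    HasSum (fun m => 2 * (d (2 * m) / (2 * m + 1) !)) s := by
  rw [← (mul_right_injective₀ (two_ne_zero' ℕ)).hasSum_iff] at h
  · convert h using 2 with m
    simp only [Function.comp_apply, integral_neg_one_one_pow_two_mul, Nat.factorial_succ]
    push_cast
    field_simp
  · rintro n hn
    obtain ⟨m, rfl⟩ : Odd n := by simpa using hn
    rw [integral_neg_one_one_pow_two_mul_add_one, mul_zero]

/-- If `q : ℝ → ℝ` is the restriction of an entire function, then for every `t`
the series `Σ q^{(2n)}(t)/(2n+1)!` converges absolutely and equals
`(1/2) ∫_{t−1}^{t+1} q(τ) dτ`. -/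
theorem stmt8 (q : ℝ → ℝ)
    (hq : ∃ F : ℂ → ℂ, Differentiable ℂ F ∧ ∀ x : ℝ, F x = (q x : ℂ)) (t : ℝ) :
    Summable (fun n : ℕ => |iteratedDeriv (2 * n) q t / ((2 * n + 1).factorial : ℝ)|) ∧
    ∑' n : ℕ, iteratedDeriv (2 * n) q t / ((2 * n + 1).factorial : ℝ)
      = (1 / 2) * ∫ τ in (t - 1)..(t + 1), q τ := by
  obtain ⟨F, hF, hFq⟩ := hq
  set a : ℕ → ℝ := fun n => iteratedDeriv n q t / n ! with ha
  have htaylor : ∀ τ, HasSum (fun n => a n * (τ - t) ^ n) (q τ) :=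
    hasSum_taylorSeries_of_ofReal_entire hF hFq t
  have hR : Summable fun n => a n * 2 ^ n := by simpa using (htaylor (t + 2)).summable
  have hint :
      HasSum (fun n => a n * ∫ x in (-1 : ℝ)..1, x ^ n) (∫ τ in (t - 1)..(t + 1), q τ) := by
    have hterm :=
      hasSum_intervalIntegral_of_hasSum_mul_pow hR (r := 1) (by norm_num) fun τ _ => htaylor τ
    convert hterm using 2 with n
    rw [intervalIntegral.integral_const_mul, intervalIntegral.integral_comp_sub_right (· ^ n)]
    norm_num
  have heven := hasSum_two_mul_div_factorial_succ_of_hasSum_moments hint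
  have habs : Summable fun m => |iteratedDeriv (2 * m) q t / (2 * m + 1) !| := by
    have heven_abs :=
      (summable_abs_mul_pow_of_summable_mul_pow hR (r := 1) (by norm_num)).comp_injective
        (mul_right_injective₀ (two_ne_zero' ℕ))
    refine .of_nonneg_of_le (fun _ => abs_nonneg _) (fun m => ?_) heven_abs
    simp only [Function.comp_apply, ha, abs_one, one_pow, mul_one, abs_div, Nat.abs_cast]
    gcongr
    omega
  refine ⟨habs, ?_⟩
  have htwice := (habs.of_abs.hasSum.mul_left 2).unique heven
  linarith
end

section
/- Let ω, g ∈ ℝ and let q : ℝ → ℝ be C² with ∫_ℝ e^{−|σ|}|q(σ)| dσ < ∞. Suppose q satisfies the nonlocal Euler–Lagrange equation −q''(τ) − ω² q(τ) + (g/2)·∫_ℝ e^{−|τ−σ|} q(σ) dσ = 0 for all τ ∈ ℝ. Then q is four times continuously differentiable and satisfies the fourth-order ordinary differential equation q''''(τ) + (ω² − 1) q''(τ) + (g − ω²) q(τ) = 0 for all τ ∈ ℝ. -/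
/-!
The kernel `e^{-|t|}` is the Green's function of `1 - d²/dt²`: splitting
`K(τ) = ∫ e^{-|τ-σ|} q(σ) dσ` at `σ = τ` into `e^{-τ} ∫_{σ ≤ τ} e^σ q + e^τ ∫_{σ > τ} e^{-σ} q`
and differentiating twice gives `K'' = K - 2q`, the boundary terms cancelling in `K'` and
adding up in `K''`. Hence `q'' = -ω² q + (g/2) K` is `C²`, and differentiating it twice and
substituting `(g/2) K = q'' + ω² q` yields the fourth-order equation.
-/

open MeasureTheory Set Real

section FTC

variable {E : Type*} [NormedAddCommGroup E] [NormedSpace ℝ E] [CompleteSpace E] {f : ℝ → E}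

theorem hasDerivAt_integral_Iic (hf : Continuous f) (hfi : ∀ a, IntegrableOn f (Iic a))
    (τ : ℝ) : HasDerivAt (fun t => ∫ x in Iic t, f x) (f τ) τ := by
  have hsplit : (fun t => ∫ x in Iic t, f x) = fun t => (∫ x in Iic 0, f x) + ∫ x in 0..t, f x := by
    funext t
    rw [← intervalIntegral.integral_Iic_sub_Iic (hfi 0) (hfi t), add_sub_cancel]
  rw [hsplit]
  exact ((hf.integral_hasStrictDerivAt 0 τ).hasDerivAt.const_add _)

theorem hasDerivAt_integral_Ioi (hf : Continuous f) (hfi : ∀ a, IntegrableOn f (Ioi a))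
    (τ : ℝ) : HasDerivAt (fun t => ∫ x in Ioi t, f x) (-f τ) τ := by
  have hsplit : (fun t => ∫ x in Ioi t, f x) = fun t => (∫ x in Ioi 0, f x) - ∫ x in 0..t, f x := by
    funext t
    rw [← intervalIntegral.integral_Ioi_sub_Ioi' (hfi 0) (hfi t), sub_sub_cancel]
  rw [hsplit]
  exact ((hf.integral_hasStrictDerivAt 0 τ).hasDerivAt.const_sub _)

end FTC

theorem ContDiff.of_contDiff_deriv_deriv {𝕜 F : Type*} [NontriviallyNormedField 𝕜]
    [NormedAddCommGroup F] [NormedSpace 𝕜 F] {f : 𝕜 → F} {n : ℕ} (hf : ContDiff 𝕜 2 f)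
    (h : ContDiff 𝕜 n (deriv (deriv f))) : ContDiff 𝕜 (n + 2) f := by
  rw [show (n + 2 : WithTop ℕ∞) = n + 1 + 1 by rw [add_assoc, one_add_one_eq_two],
    contDiff_succ_iff_deriv, contDiff_succ_iff_deriv]
  exact ⟨hf.differentiable two_ne_zero, by simp, hf.differentiable_deriv_two, by simp, h⟩

noncomputable def expAbsConv (q : ℝ → ℝ) (τ : ℝ) : ℝ := ∫ σ, exp (-|τ - σ|) * q σ

noncomputable def leftExpIntegral (q : ℝ → ℝ) (τ : ℝ) : ℝ := ∫ σ in Iic τ, exp σ * q σ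

noncomputable def rightExpIntegral (q : ℝ → ℝ) (τ : ℝ) : ℝ := ∫ σ in Ioi τ, exp (-σ) * q σ

section ExpAbsConv

variable {q : ℝ → ℝ}

theorem integrableOn_exp_mul_of_add_abs_le (hw : Integrable (fun σ => exp (-|σ|) * q σ))
    {e : ℝ → ℝ} (he : Continuous e) {s : Set ℝ} (hs : MeasurableSet s) (C : ℝ)
    (hle : ∀ σ ∈ s, e σ + |σ| ≤ C) : IntegrableOn (fun σ => exp (e σ) * q σ) s := by
  have hfactor : (fun σ => exp (e σ) * q σ) = fun σ => exp (e σ + |σ|) * (exp (-|σ|) * q σ) := by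
    funext σ
    rw [← mul_assoc, ← exp_add, add_neg_cancel_right]
  rw [hfactor]
  refine hw.restrict.bdd_mul (c := exp C) (by fun_prop) ((ae_restrict_iff' hs).2 ?_)
  filter_upwards with σ hσ
  rw [norm_eq_abs, abs_exp, exp_le_exp]
  exact hle σ hσ

variable (hw : Integrable (fun σ => exp (-|σ|) * q σ))
include hw

theorem integrableOn_Iic_exp_mul (τ : ℝ) : IntegrableOn (fun σ => exp σ * q σ) (Iic τ) :=
  integrableOn_exp_mul_of_add_abs_le hw (e := fun σ => σ) continuous_id measurableSet_Iic
    (2 * |τ|) fun σ (hσ : σ ≤ τ) => by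
      rcases abs_cases σ with ⟨h1, h2⟩ | ⟨h1, h2⟩ <;> linarith [le_abs_self τ, abs_nonneg τ]

theorem integrableOn_Ioi_exp_neg_mul (τ : ℝ) : IntegrableOn (fun σ => exp (-σ) * q σ) (Ioi τ) :=
  integrableOn_exp_mul_of_add_abs_le hw continuous_neg measurableSet_Ioi (2 * |τ|)
    fun σ (hσ : τ < σ) => by
      rcases abs_cases σ with ⟨h1, h2⟩ | ⟨h1, h2⟩ <;> linarith [neg_abs_le τ, abs_nonneg τ]

theorem integrable_exp_neg_abs_sub_mul (τ : ℝ) : Integrable (fun σ => exp (-|τ - σ|) * q σ) := by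
  rw [← integrableOn_univ]
  refine integrableOn_exp_mul_of_add_abs_le hw (by fun_prop) MeasurableSet.univ |τ| fun σ _ => ?_
  linarith [abs_sub_abs_le_abs_sub σ τ, abs_sub_comm σ τ]

theorem expAbsConv_eq (τ : ℝ) :
    expAbsConv q τ = exp (-τ) * leftExpIntegral q τ + exp τ * rightExpIntegral q τ := by
  have hi := integrable_exp_neg_abs_sub_mul hw τ
  rw [expAbsConv, ← intervalIntegral.integral_Iic_add_Ioi hi.integrableOn hi.integrableOn,
    leftExpIntegral, rightExpIntegral, ← integral_const_mul, ← integral_const_mul]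
  congr 1
  · refine setIntegral_congr_fun measurableSet_Iic fun σ (hσ : σ ≤ τ) => ?_
    rw [abs_of_nonneg (sub_nonneg.2 hσ), ← mul_assoc, ← exp_add]
    ring_nf
  · refine setIntegral_congr_fun measurableSet_Ioi fun σ (hσ : τ < σ) => ?_
    rw [abs_of_neg (sub_neg.2 hσ), ← mul_assoc, ← exp_add]
    ring_nf

variable (hq : Continuous q)
include hq

theorem hasDerivAt_leftExpIntegral (τ : ℝ) :
    HasDerivAt (leftExpIntegral q) (exp τ * q τ) τ :=
  hasDerivAt_integral_Iic (by fun_prop) (integrableOn_Iic_exp_mul hw) τ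

theorem hasDerivAt_rightExpIntegral (τ : ℝ) :
    HasDerivAt (rightExpIntegral q) (-(exp (-τ) * q τ)) τ :=
  hasDerivAt_integral_Ioi (by fun_prop) (integrableOn_Ioi_exp_neg_mul hw) τ

theorem hasDerivAt_expAbsConv (τ : ℝ) :
    HasDerivAt (expAbsConv q)
      (exp τ * rightExpIntegral q τ - exp (-τ) * leftExpIntegral q τ) τ := by
  rw [show expAbsConv q = _ from funext (expAbsConv_eq hw)]
  refine ((((hasDerivAt_neg τ).exp).mul (hasDerivAt_leftExpIntegral hw hq τ)).add
    ((hasDerivAt_exp τ).mul (hasDerivAt_rightExpIntegral hw hq τ))).congr_deriv ?_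
  ring

theorem hasDerivAt_deriv_expAbsConv (τ : ℝ) :
    HasDerivAt (fun t => exp t * rightExpIntegral q t - exp (-t) * leftExpIntegral q t)
      (expAbsConv q τ - 2 * q τ) τ := by
  refine (((hasDerivAt_exp τ).mul (hasDerivAt_rightExpIntegral hw hq τ)).sub
    (((hasDerivAt_neg τ).exp).mul (hasDerivAt_leftExpIntegral hw hq τ))).congr_deriv ?_
  have hexp : exp (-τ) * exp τ = 1 := by rw [← exp_add, neg_add_cancel, exp_zero]
  rw [expAbsConv_eq hw τ]
  linear_combination (-(2 * q τ)) * hexp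

theorem deriv_expAbsConv :
    deriv (expAbsConv q) = fun t => exp t * rightExpIntegral q t - exp (-t) * leftExpIntegral q t :=
  funext fun τ => (hasDerivAt_expAbsConv hw hq τ).deriv

theorem iteratedDeriv_two_expAbsConv (τ : ℝ) :
    iteratedDeriv 2 (expAbsConv q) τ = expAbsConv q τ - 2 * q τ := by
  rw [iteratedDeriv_succ, iteratedDeriv_one, deriv_expAbsConv hw hq,
    (hasDerivAt_deriv_expAbsConv hw hq τ).deriv]

theorem contDiff_two_expAbsConv : ContDiff ℝ 2 (expAbsConv q) := by
  have hK : Differentiable ℝ (expAbsConv q) := fun τ =>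
    (hasDerivAt_expAbsConv hw hq τ).differentiableAt
  rw [show (2 : WithTop ℕ∞) = 1 + 1 by norm_num, contDiff_succ_iff_deriv, deriv_expAbsConv hw hq,
    contDiff_one_iff_deriv]
  refine ⟨hK, by simp, fun τ => (hasDerivAt_deriv_expAbsConv hw hq τ).differentiableAt, ?_⟩
  rw [funext fun τ => (hasDerivAt_deriv_expAbsConv hw hq τ).deriv]
  exact hK.continuous.sub (continuous_const.mul hq)

end ExpAbsConv

/-- A `C²` solution (with exponentially weighted summability) of the nonlocal
Euler–Lagrange equation `−q'' − ω²q + (g/2)∫ e^{−|τ−σ|} q(σ) dσ = 0` is four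
times continuously differentiable and satisfies
`q'''' + (ω²−1)q'' + (g−ω²)q = 0`. -/
theorem stmt11 (ω g : ℝ) (q : ℝ → ℝ) (hq : ContDiff ℝ 2 q)
    (hint : Integrable (fun σ : ℝ => Real.exp (-|σ|) * |q σ|))
    (hEL : ∀ τ : ℝ, -(deriv (deriv q) τ) - ω ^ 2 * q τ
        + (g / 2) * ∫ σ : ℝ, Real.exp (-|τ - σ|) * q σ = 0) :
    ContDiff ℝ 4 q ∧
    ∀ τ : ℝ, iteratedDeriv 4 q τ + (ω ^ 2 - 1) * iteratedDeriv 2 q τ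
        + (g - ω ^ 2) * q τ = 0 := by
  have hqc : Continuous q := hq.continuous
  have hw : Integrable (fun σ => exp (-|σ|) * q σ) :=
    (integrable_norm_iff (by fun_prop)).1 <| by
      simpa only [norm_mul, norm_eq_abs, abs_exp] using hint
  have hK := contDiff_two_expAbsConv hw hqc
  have hq2 : deriv (deriv q) = fun τ => -(ω ^ 2 * q τ) + g / 2 * expAbsConv q τ :=
    funext fun τ => by rw [expAbsConv]; linear_combination -hEL τ
  have hiter : iteratedDeriv 2 q = deriv (deriv q) := by
    rw [iteratedDeriv_succ, iteratedDeriv_one]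
  refine ⟨hq.of_contDiff_deriv_deriv (n := 2) ?_, fun τ => ?_⟩
  · rw [hq2]
    exact (contDiff_const.mul hq).neg.add (contDiff_const.mul hK)
  · have h4 : iteratedDeriv 4 q = iteratedDeriv 2 (iteratedDeriv 2 q) := by
      simp only [iteratedDeriv_eq_iterate]; rfl
    rw [h4, hiter, hq2, iteratedDeriv_fun_add (contDiff_const.mul hq).neg.contDiffAt
      (contDiff_const.mul hK).contDiffAt, iteratedDeriv_fun_neg, iteratedDeriv_const_mul_field,
      iteratedDeriv_const_mul_field, iteratedDeriv_two_expAbsConv hw hqc, hiter, hq2]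
    ring
end

section
/- Let ω, g ∈ ℝ with 0 < 4g < (ω² + 9)(ω² + 1). Then every complex root z of the polynomial (z² − 1)(z² + ω²) + g satisfies |Re z| < 1. -/
/-- If `0 < 4g < (ω² + 9)(ω² + 1)`, every complex root `z` of
`(z² − 1)(z² + ω²) + g` satisfies `|Re z| < 1`. -/
theorem stmt12 (ω g : ℝ) (h1 : 0 < 4 * g) (h2 : 4 * g < (ω ^ 2 + 9) * (ω ^ 2 + 1))
    (z : ℂ) (hz : (z ^ 2 - 1) * (z ^ 2 + (ω : ℂ) ^ 2) + (g : ℂ) = 0) :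
    |z.re| < 1 := by
  set x := z.re with hx
  set y := z.im with hy
  have hre : (x^2 - y^2 - 1) * (x^2 - y^2 + ω^2) - (2*x*y)^2 + g = 0 := by
    have := congrArg Complex.re hz
    simp [Complex.mul_re, Complex.mul_im, pow_two] at this
    ring_nf at this ⊢
    linarith [this]
  have him : (2*x*y) * (2*(x^2-y^2) - 1 + ω^2) = 0 := by
    have := congrArg Complex.im hz
    simp [Complex.mul_re, Complex.mul_im, pow_two] at this
    ring_nf at this ⊢
    linarith [this]
  by_contra h
  push_neg at h
  have hx2 : 1 ≤ x^2 := by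
    have := sq_abs x
    nlinarith [abs_nonneg x]
  rcases mul_eq_zero.mp him with hb | hc
  · rcases mul_eq_zero.mp hb with h0 | h0
    · have hx0 : x = 0 := by linarith
      nlinarith
    · rw [h0] at hre
      nlinarith [mul_nonneg (sub_nonneg.mpr hx2) (by positivity : (0:ℝ) ≤ x^2 + ω^2)]
  · nlinarith [sq_nonneg (x*y), sq_nonneg y, mul_nonneg (sub_nonneg.mpr hx2) (by positivity : (0:ℝ) ≤ 2*x^2 + ω^2 + 1)]
end

section
/- Let ω, g ∈ ℝ with 4g ≥ (ω² + 9)(ω² + 1). Then every complex root z of the polynomial (z² − 1)(z² + ω²) + g satisfies |Re z| ≥ 1. -/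
/-- If `4g ≥ (ω² + 9)(ω² + 1)`, every complex root `z` of
`(z² − 1)(z² + ω²) + g` satisfies `|Re z| ≥ 1`. -/
theorem stmt13 (ω g : ℝ) (h : 4 * g ≥ (ω ^ 2 + 9) * (ω ^ 2 + 1))
    (z : ℂ) (hz : (z ^ 2 - 1) * (z ^ 2 + (ω : ℂ) ^ 2) + (g : ℂ) = 0) :
    |z.re| ≥ 1 := by
  set x := z.re with hx
  set y := z.im with hy
  rw [Complex.ext_iff] at hz
  obtain ⟨h1, h2⟩ := hz
  simp [pow_two, Complex.mul_re, Complex.mul_im, ← hx, ← hy] at h1 h2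
  ring_nf at h1 h2
  have hsq : 1 ≤ x ^ 2 := by
    have h2' : (2 * x * y) * (2 * (x ^ 2 - y ^ 2) + ω ^ 2 - 1) = 0 := by
      ring_nf; linarith [h2]
    rcases mul_eq_zero.mp h2' with h3 | h3
    · rcases mul_eq_zero.mp (by linarith [h3] : (2 * x) * y = 0) with h4 | h4
      · exfalso
        have hx0 : x = 0 := by linarith
        nlinarith [sq_nonneg (2 * y ^ 2 + 1 - ω ^ 2), sq_nonneg y, h1]
      · -- y = 0
        simp [h4] at h1
        nlinarith [sq_nonneg (1 - 2 * x ^ 2 - ω ^ 2), h1, h]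
    · nlinarith [sq_nonneg x, sq_nonneg y, sq_nonneg (x * y), h1, h3,
        mul_nonneg (sq_nonneg x) (sq_nonneg y)]
  nlinarith [abs_nonneg x, sq_abs x]
end

section
/- Let ω ∈ ℝ, g > 0, and let Q, P, ξ, π : ℝ → ℝ be differentiable functions satisfying the Hamilton equations Q' = P, P' = −ω²Q + √(g/2)(π + ξ), ξ' = ξ − √(g/2)Q, and π' = −π + √(g/2)Q on ℝ. Then Q is four times differentiable and satisfies Q''''(t) + (ω² − 1)Q''(t) + (g − ω²)Q(t) = 0 for all t ∈ ℝ. -/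
/-!
Differentiating `Q' = P` three more times and substituting the Hamilton equations at each step
gives `Q'' = -ω²Q + c(π + ξ)`, `Q''' = -ω²P + c(ξ - π)` and
`Q'''' = -ω²P' + c(ξ + π) - 2c²Q` with `c = √(g/2)`; eliminating `c(π + ξ)` through the formula
for `Q''` and using `2c² = g` leaves the fourth-order equation.
-/

theorem deriv_smul_add_smul {𝕜 F : Type*} [NontriviallyNormedField 𝕜] [NormedAddCommGroup F]
    [NormedSpace 𝕜 F] {f g : 𝕜 → F} (hf : Differentiable 𝕜 f) (hg : Differentiable 𝕜 g)
    (a b : 𝕜) :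
    deriv (fun t => a • f t + b • g t) = fun t => a • deriv f t + b • deriv g t := by
  funext t
  exact (((hf t).hasDerivAt.const_smul a).add ((hg t).hasDerivAt.const_smul b)).deriv

theorem deriv_mul_add_mul {𝕜 : Type*} [NontriviallyNormedField 𝕜] {f g : 𝕜 → 𝕜}
    (hf : Differentiable 𝕜 f) (hg : Differentiable 𝕜 g) (a b : 𝕜) :
    deriv (fun t => a * f t + b * g t) = fun t => a * deriv f t + b * deriv g t :=
  deriv_smul_add_smul hf hg a b

/-- The Hamilton equations of the nonlocal harmonic oscillator imply that `Q`
is four times differentiable and satisfies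
`Q'''' + (ω²−1)Q'' + (g−ω²)Q = 0`. -/
theorem stmt16 (ω g : ℝ) (hg : 0 < g) (Q P ξ π : ℝ → ℝ)
    (hQ : Differentiable ℝ Q) (hP : Differentiable ℝ P)
    (hξ : Differentiable ℝ ξ) (hπ : Differentiable ℝ π)
    (h1 : ∀ t : ℝ, deriv Q t = P t)
    (h2 : ∀ t : ℝ, deriv P t = -(ω ^ 2) * Q t + Real.sqrt (g / 2) * (π t + ξ t))
    (h3 : ∀ t : ℝ, deriv ξ t = ξ t - Real.sqrt (g / 2) * Q t)
    (h4 : ∀ t : ℝ, deriv π t = -π t + Real.sqrt (g / 2) * Q t) :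
    (Differentiable ℝ (deriv Q) ∧ Differentiable ℝ (deriv (deriv Q)) ∧
      Differentiable ℝ (deriv (deriv (deriv Q)))) ∧
    ∀ t : ℝ, deriv (deriv (deriv (deriv Q))) t + (ω ^ 2 - 1) * deriv (deriv Q) t
        + (g - ω ^ 2) * Q t = 0 := by
  set c := Real.sqrt (g / 2)
  have hc : c * c = g / 2 := Real.mul_self_sqrt (by positivity)
  have hQ1 : deriv Q = P := funext h1
  have hQ2 : deriv (deriv Q) = fun t => -(ω ^ 2) * Q t + c * (π t + ξ t) := hQ1 ▸ funext h2
  have hsum : deriv (fun t => π t + ξ t) = fun t => ξ t - π t := by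
    funext t
    rw [deriv_fun_add (hπ t) (hξ t), h3, h4]
    ring
  have hsub : deriv (fun t => ξ t - π t) = fun t => ξ t + π t - 2 * c * Q t := by
    funext t
    rw [deriv_fun_sub (hξ t) (hπ t), h3, h4]
    ring
  have hQ3 : deriv (deriv (deriv Q)) = fun t => -(ω ^ 2) * P t + c * (ξ t - π t) := by
    rw [hQ2, deriv_mul_add_mul (g := fun t => π t + ξ t) hQ (hπ.add hξ), hsum, hQ1]
  have hQ4 : deriv (deriv (deriv (deriv Q))) =
      fun t => -(ω ^ 2) * deriv P t + c * (ξ t + π t - 2 * c * Q t) := by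
    rw [hQ3, deriv_mul_add_mul (g := fun t => ξ t - π t) hP (hξ.sub hπ), hsub]
  refine ⟨⟨hQ1 ▸ hP, ?_, ?_⟩, fun t => ?_⟩
  · rw [hQ2]
    exact (hQ.const_mul _).add ((hπ.add hξ).const_mul _)
  · rw [hQ3]
    exact (hP.const_mul _).add ((hξ.sub hπ).const_mul _)
  · rw [hQ4, hQ2]
    beta_reduce
    rw [h2]
    linear_combination (-2 * Q t) * hc
end

section
/- Let T > 0 and κ ∈ ℝ with κ ≠ 0, and let q₁, q₂ : ℝ → ℝ be C² functions each satisfying the delayed harmonic oscillator equation q''(t) = −q(t) + κ·(q(t + T) + q(t − T)) for all t ∈ ℝ. If q₁(τ) = q₂(τ) for all τ ∈ [−T, T], then q₁ = q₂ on all of ℝ; that is, a solution is uniquely determined by its restriction to an interval of length 2T. -/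
/-- A solution of the delayed harmonic oscillator equation
`q''(t) = −q(t) + κ(q(t+T) + q(t−T))` (with `κ ≠ 0`) is uniquely determined by
its restriction to `[−T, T]`. -/
theorem stmt18 (T κ : ℝ) (hT : 0 < T) (hκ : κ ≠ 0) (q₁ q₂ : ℝ → ℝ)
    (hq₁ : ContDiff ℝ 2 q₁) (hq₂ : ContDiff ℝ 2 q₂)
    (h1 : ∀ t : ℝ, deriv (deriv q₁) t = -q₁ t + κ * (q₁ (t + T) + q₁ (t - T)))
    (h2 : ∀ t : ℝ, deriv (deriv q₂) t = -q₂ t + κ * (q₂ (t + T) + q₂ (t - T)))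
    (hagree : ∀ τ ∈ Set.Icc (-T) T, q₁ τ = q₂ τ) :
    ∀ t : ℝ, q₁ t = q₂ t := by
  -- continuity of the second derivatives
  have hc1 : Continuous (deriv (deriv q₁)) := by
    have : ContDiff ℝ 1 (deriv q₁) := by
      have := (contDiff_succ_iff_deriv.mp (by exact_mod_cast hq₁ : ContDiff ℝ (1+1) q₁))
      exact this.2.2
    exact this.continuous_deriv le_rfl
  have hc2 : Continuous (deriv (deriv q₂)) := by
    have : ContDiff ℝ 1 (deriv q₂) := by
      have := (contDiff_succ_iff_deriv.mp (by exact_mod_cast hq₂ : ContDiff ℝ (1+1) q₂))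
      exact this.2.2
    exact this.continuous_deriv le_rfl
  have key : ∀ n : ℕ, ∀ t : ℝ, |t| ≤ ((n : ℝ) + 1) * T → q₁ t = q₂ t := by
    intro n
    induction n with
    | zero =>
      intro t ht
      rw [abs_le] at ht
      push_cast at ht
      exact hagree t ⟨by linarith [ht.1], by linarith [ht.2]⟩
    | succ n ih =>
      intro t ht
      set c : ℝ := ((n : ℝ) + 1) * T with hc
      have hn0 : (0:ℝ) ≤ (n : ℝ) := Nat.cast_nonneg n
      have hcpos : 0 < c := by positivity
      -- second derivatives agree on [-c, c]
      have hdd : ∀ s : ℝ, |s| ≤ c → deriv (deriv q₁) s = deriv (deriv q₂) s := by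
        have hEq : Set.EqOn q₁ q₂ (Set.Ioo (-c) c) := fun x hx =>
          ih x (abs_le.2 ⟨hx.1.le, hx.2.le⟩)
        have hd : Set.EqOn (deriv q₁) (deriv q₂) (Set.Ioo (-c) c) := fun x hx =>
          Filter.EventuallyEq.deriv_eq
            (hEq.eventuallyEq_of_mem ((isOpen_Ioo).mem_nhds hx))
        have hdd' : Set.EqOn (deriv (deriv q₁)) (deriv (deriv q₂)) (Set.Ioo (-c) c) :=
          fun x hx =>
          Filter.EventuallyEq.deriv_eq
            (hd.eventuallyEq_of_mem ((isOpen_Ioo).mem_nhds hx))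
        have hcl := hdd'.closure hc1 hc2
        rw [closure_Ioo (by linarith : (-c) ≠ c)] at hcl
        intro s hs
        rw [abs_le] at hs
        exact hcl ⟨hs.1, hs.2⟩
      rw [abs_le] at ht
      push_cast at ht
      rcases le_or_gt (|t|) c with h | h
      · exact ih t h
      · -- propagation step from the equation at s
        have step : ∀ s : ℝ, |s| ≤ c →
            q₁ (s + T) + q₁ (s - T) = q₂ (s + T) + q₂ (s - T) := by
          intro s hs
          have e1 := h1 s
          have e2 := h2 s
          have hq : q₁ s = q₂ s := ih s hs
          have hdds := hdd s hs
          have : κ * (q₁ (s + T) + q₁ (s - T)) = κ * (q₂ (s + T) + q₂ (s - T)) := by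
            linarith
          exact mul_left_cancel₀ hκ this
        rcases lt_abs.mp h with h | h
        · -- t > c : use s = t - T
          have hs : |t - T| ≤ c := by
            rw [abs_le]; constructor <;> [nlinarith; linarith [ht.2]]
          have hsT : |t - T - T| ≤ c := by
            rw [abs_le]; constructor <;> [nlinarith; nlinarith]
          have hsum := step (t - T) hs
          have hminus : q₁ (t - T - T) = q₂ (t - T - T) := ih _ hsT
          have : q₁ (t - T + T) = q₂ (t - T + T) := by linarith
          simpa using this
        · -- t < -c : use s = t + T
          have h1' : t < -c := by linarith
          have hs : |t + T| ≤ c := by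
            rw [abs_le]; constructor <;> [linarith [ht.1]; nlinarith]
          have hsT : |t + T + T| ≤ c := by
            rw [abs_le]; constructor <;> [nlinarith; nlinarith]
          have hsum := step (t + T) hs
          have hplus : q₁ (t + T + T) = q₂ (t + T + T) := ih _ hsT
          have : q₁ (t + T - T) = q₂ (t + T - T) := by linarith
          simpa using this
  intro t
  obtain ⟨n, hn⟩ := exists_nat_ge (|t| / T)
  apply key n
  have : |t| ≤ (n : ℝ) * T := by
    rw [div_le_iff₀ hT] at hn; linarith
  nlinarith
end
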